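/- Let V be the 5×5 matrix with entries determined by parameters g⁽¹⁾, g⁽²⁾, μ_Y, μ_{Y²}, μ_{Y³}, μ_{Y⁴} as follows: V₁₁=V₁₃=V₃₁=V₃₃ = g⁽¹⁾−g⁽²⁾, V₁₅=V₃₅=V₅₁=V₅₃ = μ_Y(g⁽¹⁾−g⁽²⁾), V₂₂ = μ_{Y²}−μ_Y², V₂₄=V₄₂ = μ_{Y³}−μ_Yμ_{Y²}, V₂₅=V₅₂ = g⁽¹⁾(μ_{Y²}−μ_Y²), V₄₄ = μ_{Y⁴}−μ_{Y²}², V₄₅=V₅₄ = g⁽¹⁾(μ_{Y³}−μ_Yμ_{Y²}), V₅₅ = μ_{Y²}g⁽¹⁾ − μ_Y²g⁽²⁾, and all other entries 0. Let u(x) = (x₅−x₁x₂)/√((x₃−x₁²)(x₄−x₂²)) and μ = (g⁽¹⁾, μ_Y, g⁽¹⁾, μ_{Y²}, g⁽¹⁾μ_Y). If 0 < g⁽¹⁾ < 1, g⁽²⁾ = g⁽¹⁾² (i.i.d. case), and μ_{Y²} > μ_Y², then ∇u(μ)ᵀ V ∇u(μ) = 1. -/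

import Mathlib

open MeasureTheory ProbabilityTheory

set_option maxHeartbeats 1000000

/-- The Delta-method variance computation in the correlation CLT: for the
limiting covariance matrix V of the empirical moment vector (in the i.i.d. case
g⁽²⁾ = (g⁽¹⁾)²) and the Pearson-correlation moment functional u, the quadratic
form of V at the gradient of u at the limiting moment vector equals 1. -/
theorem delta_variance_one (g₁ g₂ μY μY2 μY3 μY4 : ℝ)
    (hg0 : 0 < g₁) (hg1 : g₁ < 1) (hgsq : g₂ = g₁ ^ 2) (hvar : μY ^ 2 < μY2)
    (V : Matrix (Fin 5) (Fin 5) ℝ)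
    (hV : V = !![g₁ - g₂, 0, g₁ - g₂, 0, μY * (g₁ - g₂);
                 0, μY2 - μY ^ 2, 0, μY3 - μY * μY2, g₁ * (μY2 - μY ^ 2);
                 g₁ - g₂, 0, g₁ - g₂, 0, μY * (g₁ - g₂);
                 0, μY3 - μY * μY2, 0, μY4 - μY2 ^ 2, g₁ * (μY3 - μY * μY2);
                 μY * (g₁ - g₂), g₁ * (μY2 - μY ^ 2), μY * (g₁ - g₂),
                   g₁ * (μY3 - μY * μY2), μY2 * g₁ - μY ^ 2 * g₂])
    (u : EuclideanSpace ℝ (Fin 5) → ℝ)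
    (hu : u = fun x => (x 4 - x 0 * x 1) /
      Real.sqrt ((x 2 - (x 0) ^ 2) * (x 3 - (x 1) ^ 2)))
    (gr : EuclideanSpace ℝ (Fin 5))
    (hgrad : HasGradientAt u gr
      ((WithLp.equiv 2 (Fin 5 → ℝ)).symm ![g₁, μY, g₁, μY2, g₁ * μY])) :
    ∑ i, ∑ j, gr i * V i j * gr j = 1 := by
  subst hu hgsq hV
  set p : EuclideanSpace ℝ (Fin 5) :=
    (WithLp.equiv 2 (Fin 5 → ℝ)).symm ![g₁, μY, g₁, μY2, g₁ * μY] with hp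
  have hp0 : p 0 = g₁ := rfl
  have hp1 : p 1 = μY := rfl
  have hp2 : p 2 = g₁ := rfl
  have hp3 : p 3 = μY2 := rfl
  have hp4 : p 4 = g₁ * μY := rfl
  set P : Fin 5 → (EuclideanSpace ℝ (Fin 5) →L[ℝ] ℝ) :=
    fun i => EuclideanSpace.proj (𝕜 := ℝ) i with hP
  have hproj : ∀ i, HasFDerivAt (fun x : EuclideanSpace ℝ (Fin 5) => x i) (P i) p :=
    fun i => (EuclideanSpace.proj (𝕜 := ℝ) i).hasFDerivAt
  have ha : (0:ℝ) < g₁ - g₁ ^ 2 := by nlinarith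
  have hb : (0:ℝ) < μY2 - μY ^ 2 := by linarith
  -- numerator derivative
  have hN : HasFDerivAt (fun x : EuclideanSpace ℝ (Fin 5) => x 4 - x 0 * x 1)
      (P 4 - (p 0 • P 1 + p 1 • P 0)) p := (hproj 4).sub ((hproj 0).mul (hproj 1))
  -- inner of sqrt
  have hD : HasFDerivAt (fun x : EuclideanSpace ℝ (Fin 5) =>
      (x 2 - (x 0) ^ 2) * (x 3 - (x 1) ^ 2))
      ((p 2 - p 0 ^ 2) • (P 3 - (p 1 • P 1 + p 1 • P 1))
        + (p 3 - p 1 ^ 2) • (P 2 - (p 0 • P 0 + p 0 • P 0))) p := by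
    have h1 : HasFDerivAt (fun x : EuclideanSpace ℝ (Fin 5) => x 2 - (x 0) ^ 2)
        (P 2 - (p 0 • P 0 + p 0 • P 0)) p := by
      have := (hproj 2).sub ((hproj 0).mul (hproj 0))
      simpa only [pow_two, Pi.sub_def, Pi.mul_def] using this
    have h2 : HasFDerivAt (fun x : EuclideanSpace ℝ (Fin 5) => x 3 - (x 1) ^ 2)
        (P 3 - (p 1 • P 1 + p 1 • P 1)) p := by
      have := (hproj 3).sub ((hproj 1).mul (hproj 1))
      simpa only [pow_two, Pi.sub_def, Pi.mul_def] using this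
    exact h1.mul h2
  have hDp : (p 2 - p 0 ^ 2) * (p 3 - p 1 ^ 2) = (g₁ - g₁ ^ 2) * (μY2 - μY ^ 2) := by
    rw [hp0, hp1, hp2, hp3]
  have habpos : (0:ℝ) < (g₁ - g₁ ^ 2) * (μY2 - μY ^ 2) := mul_pos ha hb
  have hDne : (p 2 - p 0 ^ 2) * (p 3 - p 1 ^ 2) ≠ 0 := by rw [hDp]; exact ne_of_gt habpos
  have hS := hD.sqrt hDne
  have hsne : Real.sqrt ((p 2 - p 0 ^ 2) * (p 3 - p 1 ^ 2)) ≠ 0 := by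
    rw [hDp]; exact ne_of_gt (Real.sqrt_pos.mpr habpos)
  have hSinv := (hasDerivAt_inv hsne).comp_hasFDerivAt p hS
  have hufull := hN.mul hSinv
  have hueq : (fun x : EuclideanSpace ℝ (Fin 5) => (x 4 - x 0 * x 1) /
      Real.sqrt ((x 2 - (x 0) ^ 2) * (x 3 - (x 1) ^ 2)))
      = fun x : EuclideanSpace ℝ (Fin 5) => (x 4 - x 0 * x 1) *
      (Real.sqrt ((x 2 - (x 0) ^ 2) * (x 3 - (x 1) ^ 2)))⁻¹ := by
    funext x; rw [div_eq_mul_inv]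
  rw [hueq] at hgrad
  have hL := hgrad.hasFDerivAt.unique hufull
  have hNp : p 4 - p 0 * p 1 = 0 := by rw [hp0, hp1, hp4]; ring
  set s : ℝ := Real.sqrt ((g₁ - g₁ ^ 2) * (μY2 - μY ^ 2)) with hs
  have hsp : Real.sqrt ((p 2 - p 0 ^ 2) * (p 3 - p 1 ^ 2)) = s := by rw [hDp]
  have key : ∀ i, gr i =
      s⁻¹ * ((P 4 - (p 0 • P 1 + p 1 • P 0)) (EuclideanSpace.single i 1)) := by
    intro i
    have h1 : gr i = (InnerProductSpace.toDual ℝ (EuclideanSpace ℝ (Fin 5))) gr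
        (EuclideanSpace.single i 1) := by
      simp [InnerProductSpace.toDual_apply_apply, EuclideanSpace.inner_single_right]
    rw [h1, hL]
    simp [hNp, hsp]
  have e0 : gr 0 = -(s⁻¹ * μY) := by
    have := key 0
    simpa [hP, EuclideanSpace.single_apply, hp0, hp1] using this
  have e1 : gr 1 = -(s⁻¹ * g₁) := by
    have := key 1
    simpa [hP, EuclideanSpace.single_apply, hp0, hp1] using this
  have e2 : gr 2 = 0 := by
    have := key 2
    simpa [hP, EuclideanSpace.single_apply, hp0, hp1] using this
  have e3 : gr 3 = 0 := by
    have := key 3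
    simpa [hP, EuclideanSpace.single_apply, hp0, hp1] using this
  have e4 : gr 4 = s⁻¹ := by
    have := key 4
    simpa [hP, EuclideanSpace.single_apply, hp0, hp1] using this
  have hs2 : s ^ 2 = (g₁ - g₁ ^ 2) * (μY2 - μY ^ 2) := Real.sq_sqrt habpos.le
  have hsne' : s ≠ 0 := by
    have : 0 < s := Real.sqrt_pos.mpr habpos
    exact ne_of_gt this
  simp only [Fin.sum_univ_five, e0, e1, e2, e3, e4, Matrix.cons_val', Matrix.cons_val_zero,
    Matrix.cons_val_one, Matrix.head_cons, Matrix.empty_val', Matrix.cons_val_fin_one,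
    Matrix.head_fin_const, Matrix.cons_val_two, Matrix.cons_val_three, Matrix.cons_val_four,
    Matrix.tail_cons, Matrix.of_apply]
  have hss : s⁻¹ ^ 2 * s ^ 2 = 1 := by
    rw [inv_pow]
    field_simp
  linear_combination (-(s⁻¹ ^ 2)) * hs2 + hss
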